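/- Let n ≥ 6, let σ be a 3-form on ℝⁿ, and let F : ℝⁿ → ℝⁿ be a continuous map such that F(tX) = tF(X) for all t ∈ ℝ and X ∈ ℝⁿ, ⟨F(X), X⟩ = 0 and ‖F(X)‖ = ‖X‖ for all X, and σ_X² = −‖X‖² id + X⊗X + F(X)⊗F(X) for all X ∈ ℝⁿ. Then F(X+Y) lies in the linear span of F(X) and F(Y) for all X, Y ∈ ℝⁿ. -/

import Mathlib

open scoped RealInnerProductSpace

noncomputable section

/-- Euclidean space `ℝⁿ`. -/
abbrev Euc (n : ℕ) : Type := EuclideanSpace ℝ (Fin n)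

/-- The skew-symmetric endomorphism `τ_X` of `ℝⁿ` associated to a 3-form `τ` and a vector `X`,
characterized by `⟪τ_X Y, Z⟫ = τ (X, Y, Z)`. -/
noncomputable def contr3 {n : ℕ} (τ : AlternatingMap ℝ (Euc n) ℝ (Fin 3)) (X : Euc n) :
    Euc n →ₗ[ℝ] Euc n where
  toFun Y := ∑ i : Fin n,
    ((τ.curryLeft X).curryLeft Y ![EuclideanSpace.single i 1]) • EuclideanSpace.single i (1 : ℝ)
  map_add' Y₁ Y₂ := by
    simp [map_add, add_smul, Finset.sum_add_distrib]
  map_smul' c Y := by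
    simp [map_smul, smul_smul, Finset.smul_sum]

/-- `τ` is a vector cross product: `‖τ_X Y‖² = ‖X‖²‖Y‖² − ⟪X,Y⟫²`. -/
def IsVCP {n : ℕ} (τ : AlternatingMap ℝ (Euc n) ℝ (Fin 3)) : Prop :=
  ∀ X Y : Euc n, ‖contr3 τ X Y‖ ^ 2 = ‖X‖ ^ 2 * ‖Y‖ ^ 2 - ⟪X, Y⟫ ^ 2

/-- `σ` is a generalized vector cross product: there is a nonzero skew-symmetric endomorphism `A`
such that for every unit vector `X`, `σ_X` is orthogonally conjugate to `A`. -/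
def IsGVCP {n : ℕ} (σ : AlternatingMap ℝ (Euc n) ℝ (Fin 3)) : Prop :=
  ∃ A : Euc n →ₗ[ℝ] Euc n, A ≠ 0 ∧ (∀ X Y : Euc n, ⟪A X, Y⟫ = -⟪X, A Y⟫) ∧
    ∀ X : Euc n, ‖X‖ = 1 → ∃ u : Euc n ≃ₗᵢ[ℝ] Euc n,
      ∀ Y : Euc n, contr3 σ X Y = u (A (u.symm Y))

/-- The endomorphism `U ⊗ V : X ↦ ⟪X, V⟫ U`. -/
noncomputable def tens {n : ℕ} (U V : Euc n) : Euc n →ₗ[ℝ] Euc n where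
  toFun X := ⟪X, V⟫ • U
  map_add' X₁ X₂ := by simp only [inner_add_left, add_smul]
  map_smul' c X := by simp only [RingHom.id_apply]; rw [real_inner_smul_left, mul_smul]

/-- The `i`-th coordinate, as a linear functional on `ℝⁿ`. -/
noncomputable def coordL {n : ℕ} (i : Fin n) : Euc n →ₗ[ℝ] ℝ where
  toFun x := x i
  map_add' _ _ := rfl
  map_smul' _ _ := rfl

/-- The elementary 3-form `eᵢ ∧ eⱼ ∧ e_k` on `ℝⁿ`. -/
noncomputable def elem3 {n : ℕ} (i j k : Fin n) : AlternatingMap ℝ (Euc n) ℝ (Fin 3) :=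
  (Matrix.detRowAlternating : AlternatingMap ℝ (Fin 3 → ℝ) ℝ (Fin 3)).compLinearMap
    (LinearMap.pi (fun s : Fin 3 => coordL (![i, j, k] s)))

/-- The action of an orthogonal transformation `α` on 3-forms:
`(α · τ)(X,Y,Z) = τ(α⁻¹X, α⁻¹Y, α⁻¹Z)`. -/
noncomputable def oAct {n : ℕ} (α : Euc n ≃ₗᵢ[ℝ] Euc n)
    (τ : AlternatingMap ℝ (Euc n) ℝ (Fin 3)) : AlternatingMap ℝ (Euc n) ℝ (Fin 3) :=
  τ.compLinearMap α.symm.toLinearEquiv.toLinearMap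

/-- The volume form `e₁ ∧ e₂ ∧ e₃` (in any `ℝⁿ` with `n ≥ 3`). -/
noncomputable def vol3Gen {n : ℕ} (h : 3 ≤ n) : AlternatingMap ℝ (Euc n) ℝ (Fin 3) :=
  elem3 ⟨0, by omega⟩ ⟨1, by omega⟩ ⟨2, by omega⟩

/-- The fundamental `G₂` 3-form
`τ₀ = e₁∧e₂∧e₇ + e₃∧e₄∧e₇ + e₅∧e₆∧e₇ + e₁∧e₃∧e₅ − e₁∧e₄∧e₆ − e₂∧e₃∧e₆ − e₂∧e₄∧e₅`
(with 1-indexed basis vectors, stated in any `ℝⁿ` with `n ≥ 7`). -/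
noncomputable def tau0Gen {n : ℕ} (h : 7 ≤ n) : AlternatingMap ℝ (Euc n) ℝ (Fin 3) :=
  elem3 ⟨0, by omega⟩ ⟨1, by omega⟩ ⟨6, by omega⟩
  + elem3 ⟨2, by omega⟩ ⟨3, by omega⟩ ⟨6, by omega⟩
  + elem3 ⟨4, by omega⟩ ⟨5, by omega⟩ ⟨6, by omega⟩
  + elem3 ⟨0, by omega⟩ ⟨2, by omega⟩ ⟨4, by omega⟩
  - elem3 ⟨0, by omega⟩ ⟨3, by omega⟩ ⟨5, by omega⟩
  - elem3 ⟨1, by omega⟩ ⟨2, by omega⟩ ⟨5, by omega⟩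
  - elem3 ⟨1, by omega⟩ ⟨3, by omega⟩ ⟨4, by omega⟩

/-- The `SU(3)` 3-form `σ₀ = e₁∧e₃∧e₅ − e₁∧e₄∧e₆ − e₂∧e₃∧e₆ − e₂∧e₄∧e₅`
(with 1-indexed basis vectors, stated in any `ℝⁿ` with `n ≥ 6`). -/
noncomputable def sigma0Gen {n : ℕ} (h : 6 ≤ n) : AlternatingMap ℝ (Euc n) ℝ (Fin 3) :=
  elem3 ⟨0, by omega⟩ ⟨2, by omega⟩ ⟨4, by omega⟩
  - elem3 ⟨0, by omega⟩ ⟨3, by omega⟩ ⟨5, by omega⟩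
  - elem3 ⟨1, by omega⟩ ⟨2, by omega⟩ ⟨5, by omega⟩
  - elem3 ⟨1, by omega⟩ ⟨3, by omega⟩ ⟨4, by omega⟩

end

/-!
Pairing the identity for `σ_X²` with a vector `v` gives
`⟪v, F X⟫² = ‖X‖²‖v‖² - ⟪v, X⟫² - ‖σ_X v‖²`. Every term on the right is a quadratic form in `X`
(`X ↦ σ_X` is linear), so `X ↦ ⟪v, F X⟫²` obeys the parallelogram law. If `v ⊥ F X, F Y`, this gives
`⟪v, F (X + Y)⟫² + ⟪v, F (X - Y)⟫² = 0`, hence `v ⊥ F (X + Y)`: `F (X + Y)` is orthogonal to the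
orthogonal complement of `span {F X, F Y}`, so it lies in that span.
-/

section Contr3

variable {n : ℕ} (τ : AlternatingMap ℝ (Euc n) ℝ (Fin 3))

lemma contr3_apply (X Y : Euc n) :
    contr3 τ X Y = ∑ i, τ ![X, Y, EuclideanSpace.single i 1] • EuclideanSpace.single i 1 := by
  simp [contr3]

lemma inner_contr3 (X Y Z : Euc n) : ⟪contr3 τ X Y, Z⟫ = τ ![X, Y, Z] := by
  let ℓ : Euc n →ₗ[ℝ] ℝ := τ.toMultilinearMap.toLinearMap ![X, Y, 0] 2
  have hℓ : ∀ W, ℓ W = τ ![X, Y, W] := fun W => by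
    simp only [ℓ, MultilinearMap.toLinearMap_apply, AlternatingMap.coe_multilinearMap]
    congr 1; ext i : 1; fin_cases i <;> rfl
  rw [← hℓ]
  conv_rhs => rw [← (EuclideanSpace.basisFun (Fin n) ℝ).sum_repr Z]
  simp only [map_sum, map_smul]
  simp [contr3_apply, sum_inner, real_inner_smul_left, hℓ, EuclideanSpace.inner_single_left,
    mul_comm]

lemma inner_contr3_swap (X Y Z : Euc n) : ⟪contr3 τ X Y, Z⟫ = -⟪contr3 τ X Z, Y⟫ := by
  have hswap : ![X, Y, Z] = ![X, Z, Y] ∘ Equiv.swap 1 2 := by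
    ext i : 1; fin_cases i <;> rfl
  rw [inner_contr3, inner_contr3, hswap, τ.map_swap _ (by decide)]

lemma contr3_add_left (X X' Y : Euc n) :
    contr3 τ (X + X') Y = contr3 τ X Y + contr3 τ X' Y :=
  ext_inner_right ℝ fun Z => by
    rw [inner_add_left, inner_contr3, inner_contr3, inner_contr3, τ.map_vecCons_add]

lemma contr3_sub_left (X X' Y : Euc n) :
    contr3 τ (X - X') Y = contr3 τ X Y - contr3 τ X' Y :=
  ext_inner_right ℝ fun Z => by
    rw [inner_sub_left, inner_contr3, inner_contr3, inner_contr3, sub_eq_add_neg,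
      τ.map_vecCons_add, ← neg_one_smul ℝ X', τ.map_vecCons_smul, neg_one_smul, ← sub_eq_add_neg]

lemma norm_contr3_sq_of_comp_self_eq {X U : Euc n} (h : contr3 τ X ∘ₗ contr3 τ X =
      (-(‖X‖ ^ 2)) • LinearMap.id + tens X X + tens U U) (v : Euc n) :
    ‖contr3 τ X v‖ ^ 2 = ‖X‖ ^ 2 * ‖v‖ ^ 2 - ⟪v, X⟫ ^ 2 - ⟪v, U⟫ ^ 2 := by
  have hv := congrArg (fun L : Euc n →ₗ[ℝ] Euc n => ⟪L v, v⟫) h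
  simp only [LinearMap.comp_apply, inner_contr3_swap τ X (contr3 τ X v), tens,
    LinearMap.add_apply, LinearMap.smul_apply, LinearMap.id_apply, LinearMap.coe_mk,
    AddHom.coe_mk, inner_add_left, real_inner_smul_left, real_inner_self_eq_norm_sq] at hv
  rw [real_inner_comm v X, real_inner_comm v U] at hv
  linear_combination -hv

end Contr3

section SquareIdentity

variable {n : ℕ} {σ : AlternatingMap ℝ (Euc n) ℝ (Fin 3)} {F : Euc n → Euc n}
  (hsq : ∀ X : Euc n, contr3 σ X ∘ₗ contr3 σ X =
    (-(‖X‖ ^ 2)) • LinearMap.id + tens X X + tens (F X) (F X))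
include hsq

lemma inner_sq_parallelogram (v X Y : Euc n) :
    ⟪v, F (X + Y)⟫ ^ 2 + ⟪v, F (X - Y)⟫ ^ 2 = 2 * (⟪v, F X⟫ ^ 2 + ⟪v, F Y⟫ ^ 2) := by
  have hXY := norm_contr3_sq_of_comp_self_eq σ (hsq (X + Y)) v
  have hXY' := norm_contr3_sq_of_comp_self_eq σ (hsq (X - Y)) v
  have hX := norm_contr3_sq_of_comp_self_eq σ (hsq X) v
  have hY := norm_contr3_sq_of_comp_self_eq σ (hsq Y) v
  rw [contr3_add_left] at hXY
  rw [contr3_sub_left] at hXY'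
  have hpar := parallelogram_law_with_norm ℝ (contr3 σ X v) (contr3 σ Y v)
  have hpar' := parallelogram_law_with_norm ℝ X Y
  rw [inner_add_right] at hXY
  rw [inner_sub_right] at hXY'
  linear_combination hXY + hXY' - 2 * hX - 2 * hY - hpar + ‖v‖ ^ 2 * hpar'

lemma inner_apply_add_eq_zero {v X Y : Euc n} (hX : ⟪v, F X⟫ = 0) (hY : ⟪v, F Y⟫ = 0) :
    ⟪v, F (X + Y)⟫ = 0 := by
  have h := inner_sq_parallelogram hsq v X Y
  rw [hX, hY] at h
  nlinarith [sq_nonneg ⟪v, F (X + Y)⟫, sq_nonneg ⟪v, F (X - Y)⟫]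

end SquareIdentity

theorem statement11_general {n : ℕ} (σ : AlternatingMap ℝ (Euc n) ℝ (Fin 3))
    (F : Euc n → Euc n)
    (hsq : ∀ X : Euc n, contr3 σ X ∘ₗ contr3 σ X =
      (-(‖X‖ ^ 2)) • LinearMap.id + tens X X + tens (F X) (F X)) :
    ∀ X Y : Euc n, F (X + Y) ∈ Submodule.span ℝ {F X, F Y} := by
  intro X Y
  set K := Submodule.span ℝ {F X, F Y}
  rw [← K.orthogonal_orthogonal, Submodule.mem_orthogonal]
  intro v hv
  have hperp : ∀ U ∈ K, ⟪v, U⟫ = 0 := fun U hU => Submodule.inner_left_of_mem_orthogonal hU hv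
  exact inner_apply_add_eq_zero hsq (hperp _ (Submodule.subset_span (Set.mem_insert _ _)))
    (hperp _ (Submodule.subset_span (Set.mem_insert_of_mem _ rfl)))

/-- Let `n ≥ 6`, let `σ` be a 3-form on `ℝⁿ`, and let `F : ℝⁿ → ℝⁿ` be a
continuous map such that `F(tX) = tF(X)`, `⟪F(X), X⟫ = 0`, `‖F(X)‖ = ‖X‖`, and
`σ_X² = −‖X‖² id + X⊗X + F(X)⊗F(X)` for all `X`. Then `F(X+Y)` lies in the linear span of
`F(X)` and `F(Y)` for all `X, Y ∈ ℝⁿ`. -/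
theorem statement11 {n : ℕ} (hn : 6 ≤ n) (σ : AlternatingMap ℝ (Euc n) ℝ (Fin 3))
    (F : Euc n → Euc n) (hFcont : Continuous F)
    (hFhom : ∀ (t : ℝ) (X : Euc n), F (t • X) = t • F X)
    (hFperp : ∀ X : Euc n, ⟪F X, X⟫ = 0)
    (hFnorm : ∀ X : Euc n, ‖F X‖ = ‖X‖)
    (hsq : ∀ X : Euc n, contr3 σ X ∘ₗ contr3 σ X =
      (-(‖X‖ ^ 2)) • LinearMap.id + tens X X + tens (F X) (F X)) :
    ∀ X Y : Euc n, F (X + Y) ∈ Submodule.span ℝ {F X, F Y} :=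
  statement11_general σ F hsq
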